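/- arXiv:2212.04122 — 3 statements merged into one kernel-verified Lean document; each statement's English description precedes it below -/
import Mathlib

section
/- The potential function F is differentiable, and for every player i, time t ∈ {0,…,T}, state s and action a, its partial derivative with respect to x^i_{tsa} equals ℓ^i_{tsa}(x) = C^i_{tsa} + k(D^i_{ts}(x) + G^i_{tsa}(x)); that is, ∂F/∂x^i_{tsa}(x) = C^i_{tsa} + k(1 − ∏_{j≠i}(1 − ∑_{a'} x^j_{tsa'})) + k(1 − ∏_{j≠i}(1 − x^j_{tsa})). -/
open Finset

/-- State-level collision risk `Dⁱₜₛ(x) = 1 - ∏_{j ≠ i} (1 - ∑ₐ xʲₜₛₐ)`. -/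
noncomputable def Drisk {N T S A : ℕ} (x : Fin N → Fin (T + 1) → Fin S → Fin A → ℝ)
    (i : Fin N) (t : Fin (T + 1)) (s : Fin S) : ℝ :=
  1 - ∏ j ∈ univ.erase i, (1 - ∑ a, x j t s a)

/-- State-action-level collision risk `Gⁱₜₛₐ(x) = 1 - ∏_{j ≠ i} (1 - xʲₜₛₐ)`. -/
noncomputable def Grisk {N T S A : ℕ} (x : Fin N → Fin (T + 1) → Fin S → Fin A → ℝ)
    (i : Fin N) (t : Fin (T + 1)) (s : Fin S) (a : Fin A) : ℝ :=
  1 - ∏ j ∈ univ.erase i, (1 - x j t s a)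

/-- Congestion cost `ℓⁱₜₛₐ(x) = Cⁱₜₛₐ + k (Dⁱₜₛ(x) + Gⁱₜₛₐ(x))`. -/
noncomputable def ell {N T S A : ℕ} (k : ℝ) (C : Fin N → Fin (T + 1) → Fin S → Fin A → ℝ)
    (x : Fin N → Fin (T + 1) → Fin S → Fin A → ℝ)
    (i : Fin N) (t : Fin (T + 1)) (s : Fin S) (a : Fin A) : ℝ :=
  C i t s a + k * (Drisk x i t s + Grisk x i t s a)

/-- The potential function `F`. -/
noncomputable def potF {N T S A : ℕ} (k : ℝ) (C : Fin N → Fin (T + 1) → Fin S → Fin A → ℝ)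
    (x : Fin N → Fin (T + 1) → Fin S → Fin A → ℝ) : ℝ :=
  (∑ i, ∑ t, ∑ s, ∑ a, x i t s a * C i t s a) +
    k * ∑ t, ∑ s,
      ((∑ i, ∑ a, 2 * x i t s a) + (∏ i, (1 - ∑ a, x i t s a)) +
        ∑ a, ∏ i, (1 - x i t s a))

/-!
The potential is affine in each single coordinate `xⁱₜₛₐ`: that coordinate occurs in the products
`∏ⱼ (1 - ∑ₐ xʲₜₛₐ)` and `∏ⱼ (1 - xʲₜₛₐ)` only through their `i`-th factor, and there linearly.
Hence `F (x + h eⁱₜₛₐ) = F x + h ℓⁱₜₛₐ(x)` exactly: the slope of the linear terms is `Cⁱₜₛₐ + 2k`,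
that of each product is `-k` times the product of the other factors, and `2 - ∏ - ∏ = Dⁱₜₛ + Gⁱₜₛₐ`.
Differentiating along the line gives the partial derivative, since `F` is a polynomial.
-/

theorem Finset.prod_add_pi_single {ι R : Type*} [DecidableEq ι] [CommSemiring R] {s : Finset ι}
    {i : ι} (hi : i ∈ s) (f : ι → R) (c : R) :
    ∏ j ∈ s, (f j + (Pi.single i c : ι → R) j) = ∏ j ∈ s, f j + c * ∏ j ∈ s.erase i, f j := by
  rw [← mul_prod_erase s _ hi, ← mul_prod_erase s f hi,
    prod_congr rfl fun j hj => by rw [Pi.single_eq_of_ne (ne_of_mem_erase hj), add_zero]]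
  simp only [Pi.single_eq_same]
  ring

section Congestion

variable {ι α R : Type*} [Fintype ι] [Fintype α] [DecidableEq ι] [DecidableEq α] [CommRing R]

def congestion (z : ι → α → R) : R :=
  ∑ j, ∑ a, 2 * z j a + ∏ j, (1 - ∑ a, z j a) + ∑ a, ∏ j, (1 - z j a)

theorem congestion_add_single (z : ι → α → R) (i : ι) (a : α) (h : R) :
    congestion (z + (Pi.single i (Pi.single a h) : ι → α → R)) = congestion z +
      h * (2 - ∏ j ∈ univ.erase i, (1 - ∑ a', z j a') - ∏ j ∈ univ.erase i, (1 - z j a)) := by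
  set w : ι → α → R := Pi.single i (Pi.single a h)
  have hlinear : ∑ j, ∑ a', 2 * (z + w) j a' = ∑ j, ∑ a', 2 * z j a' + 2 * h := by
    simp [w, mul_add, sum_add_distrib, Pi.single_apply, ite_apply]
  have hstate : ∏ j, (1 - ∑ a', (z + w) j a') =
      ∏ j, (1 - ∑ a', z j a') + -h * ∏ j ∈ univ.erase i, (1 - ∑ a', z j a') := by
    rw [← prod_add_pi_single (mem_univ i)]
    refine prod_congr rfl fun j _ => ?_
    by_cases hj : j = i
    · subst hj
      simp only [Pi.add_apply, Pi.single_eq_same, sum_add_distrib, sum_pi_single', mem_univ,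
        ↓reduceIte, w]
      ring
    · simp [w, hj]
  have haction : ∀ a', ∏ j, (1 - (z + w) j a') =
      ∏ j, (1 - z j a') + (Pi.single a (-h * ∏ j ∈ univ.erase i, (1 - z j a)) : α → R) a' := by
    intro a'
    by_cases ha : a' = a
    · subst ha
      rw [Pi.single_eq_same, ← prod_add_pi_single (mem_univ i)]
      refine prod_congr rfl fun j _ => ?_
      by_cases hj : j = i
      · subst hj
        simp only [Pi.add_apply, Pi.single_eq_same, w]
        ring
      · simp [w, hj]
    · simp [w, ha, Pi.single_apply, ite_apply]
  rw [congestion, congestion, hlinear, hstate, sum_congr rfl fun a' _ => haction a',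
    sum_add_distrib, sum_pi_single']
  simp only [neg_mul, mem_univ, ↓reduceIte]
  ring

end Congestion

section Potential

variable {N T S A : ℕ} (k : ℝ) (C x : Fin N → Fin (T + 1) → Fin S → Fin A → ℝ)
  (i : Fin N) (t : Fin (T + 1)) (s : Fin S) (a : Fin A)

theorem potF_eq_sum_congestion :
    potF k C x = (∑ i, ∑ t, ∑ s, ∑ a, x i t s a * C i t s a) +
      k * ∑ t, ∑ s, congestion fun i a => x i t s a := rfl

def unitVec : Fin N → Fin (T + 1) → Fin S → Fin A → ℝ :=
  Pi.single i (Pi.single t (Pi.single s (Pi.single a 1)))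

theorem unitVec_apply (j : Fin N) (t' : Fin (T + 1)) (s' : Fin S) (a' : Fin A) :
    unitVec i t s a j t' s' a' = if j = i ∧ t' = t ∧ s' = s ∧ a' = a then 1 else 0 := by
  by_cases hj : j = i <;> by_cases ht : t' = t <;> by_cases hs : s' = s <;>
    simp [unitVec, hj, ht, hs, Pi.single_apply]

theorem slice_add_smul_unitVec (h : ℝ) (t' : Fin (T + 1)) (s' : Fin S) :
    (fun j a' => (x + h • unitVec i t s a) j t' s' a') =
      (fun j a' => x j t' s' a') +
        if t' = t ∧ s' = s then (Pi.single i (Pi.single a h) : Fin N → Fin A → ℝ) else 0 := by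
  ext j a'
  by_cases hts : t' = t ∧ s' = s
  · obtain ⟨rfl, rfl⟩ := hts
    by_cases hj : j = i <;> simp [hj, unitVec_apply, Pi.single_apply]
  · have hne : ¬(j = i ∧ t' = t ∧ s' = s ∧ a' = a) := fun h => hts ⟨h.2.1, h.2.2.1⟩
    simp [hts, hne, unitVec_apply]

theorem potF_add_smul_unitVec (h : ℝ) :
    potF k C (x + h • unitVec i t s a) = potF k C x + h * ell k C x i t s a := by
  have hlinear : ∑ j, ∑ t', ∑ s', ∑ a', (x + h • unitVec i t s a) j t' s' a' * C j t' s' a' =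
      ∑ j, ∑ t', ∑ s', ∑ a', x j t' s' a' * C j t' s' a' + h * C i t s a := by
    simp [add_mul, sum_add_distrib, unitVec_apply, ite_and]
  have hcongestion : ∀ t' s',
      congestion (fun j a' => (x + h • unitVec i t s a) j t' s' a') =
        (congestion fun j a' => x j t' s' a') + if t' = t ∧ s' = s then
          h * (2 - ∏ j ∈ univ.erase i, (1 - ∑ a', x j t s a') - ∏ j ∈ univ.erase i, (1 - x j t s a))
          else 0 := by
    intro t' s'
    rw [slice_add_smul_unitVec]
    split_ifs with hts
    · obtain ⟨rfl, rfl⟩ := hts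
      exact congestion_add_single _ i a h
    · rw [add_zero, add_zero]
  simp only [potF_eq_sum_congestion, hlinear, hcongestion, sum_add_distrib, ite_and,
    sum_ite_irrel, sum_const_zero, sum_ite_eq', mem_univ, if_true, ell, Drisk, Grisk]
  ring

theorem differentiable_potF : Differentiable ℝ (potF k C) := by
  unfold potF
  fun_prop

theorem hasLineDerivAt_potF :
    HasLineDerivAt ℝ (potF k C) (ell k C x i t s a) x (unitVec i t s a) := by
  have hline : HasDerivAt (fun h : ℝ => potF k C x + h * ell k C x i t s a)
      (ell k C x i t s a) 0 := by
    simpa using ((hasDerivAt_id (0 : ℝ)).mul_const (ell k C x i t s a)).const_add (potF k C x)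
  simpa only [HasLineDerivAt, potF_add_smul_unitVec] using hline

end Potential

theorem potential_gradient_eq_congestion_cost_general (N T S A : ℕ) (k : ℝ)
    (C : Fin N → Fin (T + 1) → Fin S → Fin A → ℝ) :
    Differentiable ℝ (potF k C) ∧
    ∀ (x : Fin N → Fin (T + 1) → Fin S → Fin A → ℝ)
      (i : Fin N) (t : Fin (T + 1)) (s : Fin S) (a : Fin A),
      fderiv ℝ (potF k C) x (Pi.single i (Pi.single t (Pi.single s (Pi.single a 1))))
        = C i t s a
            + k * (1 - ∏ j ∈ univ.erase i, (1 - ∑ a', x j t s a'))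
            + k * (1 - ∏ j ∈ univ.erase i, (1 - x j t s a)) :=
  ⟨differentiable_potF k C, fun x i t s a => by
    rw [← (differentiable_potF k C x).lineDeriv_eq_fderiv]
    refine (hasLineDerivAt_potF k C x i t s a).lineDeriv.trans ?_
    simp only [ell, Drisk, Grisk]
    ring⟩

/-- The potential `F` is differentiable and its partial derivative with respect to
`xⁱₜₛₐ` equals the congestion cost
`ℓⁱₜₛₐ(x) = Cⁱₜₛₐ + k (1 - ∏_{j≠i}(1 - ∑ₐ' xʲₜₛₐ')) + k (1 - ∏_{j≠i}(1 - xʲₜₛₐ))`. -/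
theorem potential_gradient_eq_congestion_cost (N T S A : ℕ) (k : ℝ) (hk : 0 ≤ k)
    (C : Fin N → Fin (T + 1) → Fin S → Fin A → ℝ) :
    Differentiable ℝ (potF k C) ∧
    ∀ (x : Fin N → Fin (T + 1) → Fin S → Fin A → ℝ)
      (i : Fin N) (t : Fin (T + 1)) (s : Fin S) (a : Fin A),
      fderiv ℝ (potF k C) x (Pi.single i (Pi.single t (Pi.single s (Pi.single a 1))))
        = C i t s a
            + k * (1 - ∏ j ∈ univ.erase i, (1 - ∑ a', x j t s a'))
            + k * (1 - ∏ j ∈ univ.erase i, (1 - x j t s a)) :=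
  potential_gradient_eq_congestion_cost_general N T S A k C
end

section
/- For any cost C ∈ ℝ^{(T+1)×S×A} and any z in the feasible set 𝒳(P, p0), the expected total cost is bounded below by the optimal value of the Bellman recursion: ∑_{t,s,a} C_{tsa} z_{tsa} ≥ ∑_{s} p0_s · min_{a}{Q_{0sa}}, where Q is the Q-value function defined by the backward recursion Q_{Tsa} = C_{Tsa} and Q_{(t−1)sa} = C_{(t−1)sa} + ∑_{s'} P_{t,s',s,a} min_{a'} Q_{ts'a'}. -/
/-!
Write `V t s = minₐ Q t s a` and `μ t s = ∑ₐ z t s a` for the state marginal of `z`. Flow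
conservation lets the transition operator be moved from `V` onto `z`, so the Bellman recursion
turns the expected cost into `∑ Q z - ∑_{t ≥ 1} ∑ₛ V t s μ t s`. Since `Q ≥ V` and `z ≥ 0`, also
`∑ Q z ≥ ∑_{t ≥ 0} ∑ₛ V t s μ t s`; subtracting leaves `∑ₛ V 0 s μ 0 s = ∑ₛ p0 s V 0 s`.
-/

open Finset

/-- The feasible set `𝒳(P, p0)` of state-action distributions of a finite-horizon MDP:
nonnegativity, the initial condition `∑ₐ z₀ₛₐ = p0ₛ`, and the flow conservation
`∑ₐ z₍ₜ₊₁₎ₛₐ = ∑_{s',a} P_{t,s,s',a} z_{t s' a}`. -/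
def Feasible {T S A : ℕ} (P : Fin T → Fin S → Fin S → Fin A → ℝ) (p0 : Fin S → ℝ)
    (z : Fin (T + 1) → Fin S → Fin A → ℝ) : Prop :=
  (∀ t s a, 0 ≤ z t s a) ∧
  (∀ s, ∑ a, z 0 s a = p0 s) ∧
  ∀ (t : Fin T) (s : Fin S),
    ∑ a, z t.succ s a = ∑ s', ∑ a, P t s s' a * z t.castSucc s' a

theorem inf'_mul_sum_le_sum_mul {ι : Type*} (s : Finset ι) (hs : s.Nonempty) (f w : ι → ℝ)
    (hw : ∀ i ∈ s, 0 ≤ w i) : s.inf' hs f * ∑ i ∈ s, w i ≤ ∑ i ∈ s, f i * w i := by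
  rw [mul_sum]
  exact sum_le_sum fun i hi => mul_le_mul_of_nonneg_right (inf'_le f hi) (hw i hi)

section OneStep

variable {S A : ℕ} (P : Fin S → Fin S → Fin A → ℝ) (x y : Fin S → Fin A → ℝ)

theorem sum_mul_marginal_eq_of_flow (hflow : ∀ s, ∑ a, y s a = ∑ s', ∑ a, P s s' a * x s' a)
    (f : Fin S → ℝ) :
    ∑ s', f s' * ∑ a, y s' a = ∑ s, ∑ a, (∑ s', P s' s a * f s') * x s a := by
  simp only [hflow, mul_sum, sum_mul]
  rw [sum_comm]
  refine sum_congr rfl fun s _ => ?_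
  rw [sum_comm]
  exact sum_congr rfl fun a _ => sum_congr rfl fun s' _ => by ring

theorem sum_cost_add_sum_value_eq_of_bellman (C Q : Fin S → Fin A → ℝ) (V : Fin S → ℝ)
    (hQ : ∀ s a, Q s a = C s a + ∑ s', P s' s a * V s')
    (hflow : ∀ s, ∑ a, y s a = ∑ s', ∑ a, P s s' a * x s' a) :
    ∑ s, ∑ a, C s a * x s a + ∑ s', V s' * ∑ a, y s' a = ∑ s, ∑ a, Q s a * x s a := by
  rw [sum_mul_marginal_eq_of_flow P x y hflow, ← sum_add_distrib]
  refine sum_congr rfl fun s _ => ?_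
  rw [← sum_add_distrib]
  exact sum_congr rfl fun a _ => by rw [hQ]; ring

end OneStep

theorem sum_cost_add_sum_value_eq_of_bellman_of_feasible {T S A : ℕ}
    (P : Fin T → Fin S → Fin S → Fin A → ℝ) (C Q z : Fin (T + 1) → Fin S → Fin A → ℝ)
    (V : Fin (T + 1) → Fin S → ℝ) (hQT : ∀ s a, Q (Fin.last T) s a = C (Fin.last T) s a)
    (hQrec : ∀ t s a, Q t.castSucc s a = C t.castSucc s a + ∑ s', P t s' s a * V t.succ s')
    (hflow : ∀ t s, ∑ a, z t.succ s a = ∑ s', ∑ a, P t s s' a * z t.castSucc s' a) :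
    ∑ t, ∑ s, ∑ a, C t s a * z t s a + ∑ t : Fin T, ∑ s, V t.succ s * ∑ a, z t.succ s a
      = ∑ t, ∑ s, ∑ a, Q t s a * z t s a := by
  have hstep t := sum_cost_add_sum_value_eq_of_bellman (P t) (z t.castSucc) (z t.succ)
    (C t.castSucc) (Q t.castSucc) (V t.succ) (hQrec t) (hflow t)
  simp only [Fin.sum_univ_castSucc (n := T), hQT, ← hstep, sum_add_distrib]
  ring

theorem expected_cost_ge_bellman_value_general
    (T S A : ℕ) [NeZero A] (P : Fin T → Fin S → Fin S → Fin A → ℝ)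
    (p0 : Fin S → ℝ)
    (C : Fin (T + 1) → Fin S → Fin A → ℝ)
    (Q : Fin (T + 1) → Fin S → Fin A → ℝ)
    (hQT : ∀ s a, Q (Fin.last T) s a = C (Fin.last T) s a)
    (hQrec : ∀ (t : Fin T) (s : Fin S) (a : Fin A),
      Q t.castSucc s a = C t.castSucc s a +
        ∑ s', P t s' s a * univ.inf' univ_nonempty (fun a' => Q t.succ s' a'))
    (z : Fin (T + 1) → Fin S → Fin A → ℝ) (hz : Feasible P p0 z) :
    ∑ t, ∑ s, ∑ a, C t s a * z t s a
      ≥ ∑ s, p0 s * univ.inf' univ_nonempty (fun a => Q 0 s a) := by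
  obtain ⟨hz_nonneg, hz_init, hflow⟩ := hz
  set V : Fin (T + 1) → Fin S → ℝ := fun t s => univ.inf' univ_nonempty (Q t s)
  have hcost := sum_cost_add_sum_value_eq_of_bellman_of_feasible P C Q z V hQT hQrec hflow
  have hvalue : ∑ t, ∑ s, V t s * ∑ a, z t s a ≤ ∑ t, ∑ s, ∑ a, Q t s a * z t s a :=
    sum_le_sum fun t _ => sum_le_sum fun s _ =>
      inf'_mul_sum_le_sum_mul _ _ _ _ fun a _ => hz_nonneg t s a
  have hinit : ∑ s, p0 s * V 0 s = ∑ s, V 0 s * ∑ a, z 0 s a :=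
    sum_congr rfl fun s _ => by rw [hz_init, mul_comm]
  rw [Fin.sum_univ_succ] at hvalue
  linarith

/-- For any cost `C` and any feasible `z ∈ 𝒳(P, p0)`, the expected total cost is
bounded below by the optimal value of the Bellman recursion:
`∑_{t,s,a} C_{tsa} z_{tsa} ≥ ∑ₛ p0ₛ · minₐ Q₀ₛₐ`, where `Q` satisfies the backward recursion
`Q_{Tsa} = C_{Tsa}` and `Q_{(t-1)sa} = C_{(t-1)sa} + ∑_{s'} P_{t,s',s,a} min_{a'} Q_{t s' a'}`. -/
theorem expected_cost_ge_bellman_value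
    (T S A : ℕ) [NeZero A] (P : Fin T → Fin S → Fin S → Fin A → ℝ)
    (hP0 : ∀ (t : Fin T) (s' s : Fin S) (a : Fin A), 0 ≤ P t s' s a)
    (hP1 : ∀ (t : Fin T) (s : Fin S) (a : Fin A), ∑ s', P t s' s a = 1)
    (p0 : Fin S → ℝ) (hp0 : ∀ s, 0 ≤ p0 s) (hp1 : ∑ s, p0 s = 1)
    (C : Fin (T + 1) → Fin S → Fin A → ℝ)
    (Q : Fin (T + 1) → Fin S → Fin A → ℝ)
    (hQT : ∀ s a, Q (Fin.last T) s a = C (Fin.last T) s a)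
    (hQrec : ∀ (t : Fin T) (s : Fin S) (a : Fin A),
      Q t.castSucc s a = C t.castSucc s a +
        ∑ s', P t s' s a * univ.inf' univ_nonempty (fun a' => Q t.succ s' a'))
    (z : Fin (T + 1) → Fin S → Fin A → ℝ) (hz : Feasible P p0 z) :
    ∑ t, ∑ s, ∑ a, C t s a * z t s a
      ≥ ∑ s, p0 s * univ.inf' univ_nonempty (fun a => Q 0 s a) :=
  expected_cost_ge_bellman_value_general T S A P p0 C Q hQT hQrec z hz
end

section
/- A joint state-action distribution x = (x^1,…,x^N) with x^i ∈ 𝒳(P^i, p^i_0) for all i is a Nash equilibrium of the MDP congestion game with costs ℓ^i (i.e., for all i, t, s, a: x^i_{tsa} > 0 implies Q^i_{tsa}(x) = min_{a'} Q^i_{tsa'}(x), where Q^i(x) is the Q-value recursion with stage costs ℓ^i(x) and kernel P^i) if and only if for every player i, x^i minimizes the linear objective y ↦ ∑_{t,s,a} ℓ^i_{tsa}(x) y_{tsa} over y ∈ 𝒳(P^i, p^i_0). -/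
/-!
Only the stage costs `ℓⁱ(x)` enter, so this is a statement about one finite-horizon MDP with fixed
costs `L` and Q-values `Q`. Writing `V = minₐ Q` and `gap = Q - V ≥ 0`, the Bellman recursion
together with the flow constraints gives, for every feasible `z`, the performance-difference
identity `∑ L z = ∑ₛ p0ₛ V₀ₛ + ∑ gap · z`. The occupancy measure of a greedy policy is feasible
and has zero gap cost, so `z` minimizes `∑ L z` iff its gap cost vanishes, i.e. iff `z` only
charges greedy actions.
-/

open Finset

section FiniteHorizonMDP

variable {T S A : ℕ}

def linCost (f z : Fin (T + 1) → Fin S → Fin A → ℝ) : ℝ :=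
  ∑ t, ∑ s, ∑ a, f t s a * z t s a

noncomputable def policyStateDist (P : Fin T → Fin S → Fin S → Fin A → ℝ) (p0 : Fin S → ℝ)
    (π : Fin (T + 1) → Fin S → Fin A) : Fin (T + 1) → Fin S → ℝ :=
  Fin.induction p0 fun t d s => ∑ s', P t s s' (π t.castSucc s') * d s'

noncomputable def policyOccupancy (P : Fin T → Fin S → Fin S → Fin A → ℝ) (p0 : Fin S → ℝ)
    (π : Fin (T + 1) → Fin S → Fin A) (t : Fin (T + 1)) (s : Fin S) (a : Fin A) : ℝ :=
  if a = π t s then policyStateDist P p0 π t s else 0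

variable {P : Fin T → Fin S → Fin S → Fin A → ℝ} {p0 : Fin S → ℝ}

lemma policyStateDist_nonneg (hP : ∀ t s' s a, 0 ≤ P t s' s a) (hp0 : ∀ s, 0 ≤ p0 s)
    (π : Fin (T + 1) → Fin S → Fin A) (t : Fin (T + 1)) (s : Fin S) :
    0 ≤ policyStateDist P p0 π t s := by
  induction t using Fin.induction generalizing s with
  | zero => exact hp0 s
  | succ t ih =>
    rw [policyStateDist, Fin.induction_succ]
    exact sum_nonneg fun s' _ => mul_nonneg (hP _ _ _ _) (ih s')

lemma sum_policyOccupancy (π : Fin (T + 1) → Fin S → Fin A) (t : Fin (T + 1)) (s : Fin S) :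
    ∑ a, policyOccupancy P p0 π t s a = policyStateDist P p0 π t s := by
  simp [policyOccupancy]

lemma feasible_policyOccupancy (hP : ∀ t s' s a, 0 ≤ P t s' s a) (hp0 : ∀ s, 0 ≤ p0 s)
    (π : Fin (T + 1) → Fin S → Fin A) : Feasible P p0 (policyOccupancy P p0 π) := by
  refine ⟨fun t s a => ?_, fun s => ?_, fun t s => ?_⟩
  · unfold policyOccupancy
    split_ifs
    exacts [policyStateDist_nonneg hP hp0 π t s, le_rfl]
  · rw [sum_policyOccupancy]
    rfl
  · simp only [policyStateDist, Fin.induction_succ, policyOccupancy, mul_ite,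
      mul_zero, sum_ite_eq', mem_univ, if_true]

variable [NeZero A]

noncomputable def stateValue (Q : Fin (T + 1) → Fin S → Fin A → ℝ) (t : Fin (T + 1))
    (s : Fin S) : ℝ :=
  univ.inf' univ_nonempty fun a => Q t s a

noncomputable def gap (Q : Fin (T + 1) → Fin S → Fin A → ℝ) (t : Fin (T + 1)) (s : Fin S)
    (a : Fin A) : ℝ :=
  Q t s a - stateValue Q t s

lemma gap_nonneg (Q : Fin (T + 1) → Fin S → Fin A → ℝ) (t : Fin (T + 1)) (s : Fin S)
    (a : Fin A) : 0 ≤ gap Q t s a :=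
  sub_nonneg.mpr (inf'_le _ (mem_univ a))

lemma exists_gap_eq_zero (Q : Fin (T + 1) → Fin S → Fin A → ℝ) (t : Fin (T + 1)) (s : Fin S) :
    ∃ a, gap Q t s a = 0 := by
  obtain ⟨a, -, ha⟩ := exists_mem_eq_inf' univ_nonempty fun a => Q t s a
  exact ⟨a, sub_eq_zero.mpr ha.symm⟩

def IsQFunction (P : Fin T → Fin S → Fin S → Fin A → ℝ) (L Q : Fin (T + 1) → Fin S → Fin A → ℝ) :
    Prop :=
  (∀ s a, Q (Fin.last T) s a = L (Fin.last T) s a) ∧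
  ∀ t s a, Q t.castSucc s a = L t.castSucc s a + ∑ s', P t s' s a * stateValue Q t.succ s'

variable {L Q z : Fin (T + 1) → Fin S → Fin A → ℝ}

lemma sum_stateValue_mul_stateMass (hz : Feasible P p0 z) :
    ∑ t, ∑ s, stateValue Q t s * ∑ a, z t s a
      = ∑ s, p0 s * stateValue Q 0 s
        + ∑ t : Fin T, ∑ s, stateValue Q t.succ s * ∑ a, z t.succ s a := by
  simp only [Fin.sum_univ_succ (f := fun t => ∑ s, stateValue Q t s * ∑ a, z t s a), hz.2.1,
    mul_comm (p0 _)]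

/-- By the flow constraint, the expected continuation value paid at time `t` is the value of the
state mass that `z` carries to time `t + 1`. -/
lemma sum_Q_mul_castSucc (hQ : IsQFunction P L Q) (hz : Feasible P p0 z) (t : Fin T) :
    ∑ s, ∑ a, Q t.castSucc s a * z t.castSucc s a
      = ∑ s, ∑ a, L t.castSucc s a * z t.castSucc s a
        + ∑ s', stateValue Q t.succ s' * ∑ a, z t.succ s' a := by
  have continuation : ∑ s, ∑ a, (∑ s', P t s' s a * stateValue Q t.succ s') * z t.castSucc s a
      = ∑ s', stateValue Q t.succ s' * ∑ a, z t.succ s' a := by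
    simp only [hz.2.2, mul_sum, sum_mul]
    calc _ = ∑ s, ∑ s', ∑ a, stateValue Q t.succ s' * (P t s' s a * z t.castSucc s a) :=
          sum_congr rfl fun s _ => by
            rw [sum_comm]
            exact sum_congr rfl fun _ _ => sum_congr rfl fun _ _ => by ring
      _ = _ := sum_comm
  simp only [hQ.2, add_mul, sum_add_distrib, continuation]

lemma linCost_Q (hQ : IsQFunction P L Q) (hz : Feasible P p0 z) :
    linCost Q z = linCost L z + ∑ t : Fin T, ∑ s, stateValue Q t.succ s * ∑ a, z t.succ s a := by
  rw [linCost, linCost, Fin.sum_univ_castSucc,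
    Fin.sum_univ_castSucc (f := fun t => ∑ s, ∑ a, L t s a * z t s a)]
  simp only [sum_Q_mul_castSucc hQ hz, hQ.1, sum_add_distrib]
  ring

/-- The performance-difference identity. -/
lemma linCost_eq_add_linCost_gap (hQ : IsQFunction P L Q) (hz : Feasible P p0 z) :
    linCost L z = ∑ s, p0 s * stateValue Q 0 s + linCost (gap Q) z := by
  have h := sum_stateValue_mul_stateMass (Q := Q) hz
  have hQz := linCost_Q hQ hz
  simp only [linCost, gap, sub_mul, sum_sub_distrib, ← mul_sum] at hQz ⊢
  linarith

lemma linCost_gap_nonneg (hz : ∀ t s a, 0 ≤ z t s a) : 0 ≤ linCost (gap Q) z :=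
  sum_nonneg fun t _ => sum_nonneg fun s _ => sum_nonneg fun a _ =>
    mul_nonneg (gap_nonneg Q t s a) (hz t s a)

lemma linCost_gap_eq_zero_iff (hz : ∀ t s a, 0 ≤ z t s a) :
    linCost (gap Q) z = 0 ↔ ∀ t s a, 0 < z t s a → Q t s a = stateValue Q t s := by
  have hterm (t s a) : 0 ≤ gap Q t s a * z t s a := mul_nonneg (gap_nonneg Q t s a) (hz t s a)
  have hsum (t s) : 0 ≤ ∑ a, gap Q t s a * z t s a := sum_nonneg fun a _ => hterm t s a
  rw [linCost, sum_eq_zero_iff_of_nonneg fun t _ => sum_nonneg fun s _ => hsum t s]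
  simp only [sum_eq_zero_iff_of_nonneg fun s _ => hsum _ s,
    sum_eq_zero_iff_of_nonneg fun a _ => hterm _ _ a, mem_univ, true_implies]
  refine forall₃_congr fun t s a => ⟨fun h hpos => ?_, fun h => ?_⟩
  · exact sub_eq_zero.mp ((mul_eq_zero.mp h).resolve_right hpos.ne')
  · rcases (hz t s a).eq_or_lt with h0 | hpos
    · rw [← h0, mul_zero]
    · rw [gap, h hpos, sub_self, zero_mul]

lemma exists_feasible_linCost_gap_eq_zero (hP : ∀ t s' s a, 0 ≤ P t s' s a)
    (hp0 : ∀ s, 0 ≤ p0 s) (Q : Fin (T + 1) → Fin S → Fin A → ℝ) :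
    ∃ y, Feasible P p0 y ∧ linCost (gap Q) y = 0 := by
  choose π hπ using exists_gap_eq_zero Q
  refine ⟨policyOccupancy P p0 π, feasible_policyOccupancy hP hp0 π, ?_⟩
  refine sum_eq_zero fun t _ => sum_eq_zero fun s _ => sum_eq_zero fun a _ => ?_
  by_cases ha : a = π t s
  · rw [ha, hπ, zero_mul]
  · rw [policyOccupancy, if_neg ha, mul_zero]

lemma isMinOn_linCost_iff (hQ : IsQFunction P L Q) (hP : ∀ t s' s a, 0 ≤ P t s' s a)
    (hp0 : ∀ s, 0 ≤ p0 s) (hz : Feasible P p0 z) :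
    IsMinOn (linCost L) {y | Feasible P p0 y} z ↔ linCost (gap Q) z = 0 := by
  rw [isMinOn_iff]
  constructor
  · intro hmin
    obtain ⟨y, hy, hy0⟩ := exists_feasible_linCost_gap_eq_zero hP hp0 Q
    have hle := hmin y hy
    rw [linCost_eq_add_linCost_gap hQ hz, linCost_eq_add_linCost_gap hQ hy, hy0] at hle
    exact le_antisymm (by linarith) (linCost_gap_nonneg hz.1)
  · intro hz0 y hy
    rw [linCost_eq_add_linCost_gap hQ hz, linCost_eq_add_linCost_gap hQ hy, hz0]
    linarith [linCost_gap_nonneg (Q := Q) hy.1]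

end FiniteHorizonMDP

theorem nash_iff_linear_best_response_general
    (N T S A : ℕ) [NeZero A] (k : ℝ)
    (P : Fin N → Fin T → Fin S → Fin S → Fin A → ℝ)
    (hP0 : ∀ (i : Fin N) (t : Fin T) (s' s : Fin S) (a : Fin A), 0 ≤ P i t s' s a)
    (p0 : Fin N → Fin S → ℝ) (hp0 : ∀ i s, 0 ≤ p0 i s)
    (C : Fin N → Fin (T + 1) → Fin S → Fin A → ℝ)
    (x : Fin N → Fin (T + 1) → Fin S → Fin A → ℝ)
    (hx : ∀ i, Feasible (P i) (p0 i) (x i))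
    (Q : Fin N → Fin (T + 1) → Fin S → Fin A → ℝ)
    (hQT : ∀ i s a, Q i (Fin.last T) s a = ell k C x i (Fin.last T) s a)
    (hQrec : ∀ (i : Fin N) (t : Fin T) (s : Fin S) (a : Fin A),
      Q i t.castSucc s a = ell k C x i t.castSucc s a +
        ∑ s', P i t s' s a * univ.inf' univ_nonempty (fun a' => Q i t.succ s' a')) :
    (∀ (i : Fin N) (t : Fin (T + 1)) (s : Fin S) (a : Fin A),
        0 < x i t s a → Q i t s a = univ.inf' univ_nonempty (fun a' => Q i t s a'))
      ↔ ∀ i : Fin N, ∀ y, Feasible (P i) (p0 i) y →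
          ∑ t, ∑ s, ∑ a, ell k C x i t s a * x i t s a
            ≤ ∑ t, ∑ s, ∑ a, ell k C x i t s a * y t s a :=
  forall_congr' fun i =>
    ((linCost_gap_eq_zero_iff (hx i).1).symm.trans
      ((isMinOn_linCost_iff ⟨hQT i, hQrec i⟩ (hP0 i) (hp0 i) (hx i)).symm.trans isMinOn_iff))

/-- `x = (x¹,…,xᴺ)` with `xⁱ ∈ 𝒳(Pⁱ, p0ⁱ)` is a Nash equilibrium of the MDP
congestion game with costs `ℓⁱ` (every player is supported on greedy actions of its Q-value
recursion `Qⁱ(x)` with stage costs `ℓⁱ(x)` and kernel `Pⁱ`) if and only if every player `i`'s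
block `xⁱ` minimizes the linear objective `y ↦ ∑_{t,s,a} ℓⁱₜₛₐ(x) y_{tsa}` over `𝒳(Pⁱ, p0ⁱ)`. -/
theorem nash_iff_linear_best_response
    (N T S A : ℕ) [NeZero A] (k : ℝ) (hk : 0 ≤ k)
    (P : Fin N → Fin T → Fin S → Fin S → Fin A → ℝ)
    (hP0 : ∀ (i : Fin N) (t : Fin T) (s' s : Fin S) (a : Fin A), 0 ≤ P i t s' s a)
    (hP1 : ∀ (i : Fin N) (t : Fin T) (s : Fin S) (a : Fin A), ∑ s', P i t s' s a = 1)
    (p0 : Fin N → Fin S → ℝ) (hp0 : ∀ i s, 0 ≤ p0 i s) (hp1 : ∀ i, ∑ s, p0 i s = 1)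
    (C : Fin N → Fin (T + 1) → Fin S → Fin A → ℝ)
    (x : Fin N → Fin (T + 1) → Fin S → Fin A → ℝ)
    (hx : ∀ i, Feasible (P i) (p0 i) (x i))
    (Q : Fin N → Fin (T + 1) → Fin S → Fin A → ℝ)
    (hQT : ∀ i s a, Q i (Fin.last T) s a = ell k C x i (Fin.last T) s a)
    (hQrec : ∀ (i : Fin N) (t : Fin T) (s : Fin S) (a : Fin A),
      Q i t.castSucc s a = ell k C x i t.castSucc s a +
        ∑ s', P i t s' s a * univ.inf' univ_nonempty (fun a' => Q i t.succ s' a')) :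
    (∀ (i : Fin N) (t : Fin (T + 1)) (s : Fin S) (a : Fin A),
        0 < x i t s a → Q i t s a = univ.inf' univ_nonempty (fun a' => Q i t s a'))
      ↔ ∀ i : Fin N, ∀ y, Feasible (P i) (p0 i) y →
          ∑ t, ∑ s, ∑ a, ell k C x i t s a * x i t s a
            ≤ ∑ t, ∑ s, ∑ a, ell k C x i t s a * y t s a :=
  nash_iff_linear_best_response_general N T S A k P hP0 p0 hp0 C x hx Q hQT hQrec
end
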